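/- If G is a hypergraph in which every pair of distinct edges shares at most the vertices forced by acyclicity (Berge-acyclic), and φ_G = ⊗_e φ_e, ψ_G = ⊗_e ψ_e are entanglement structures with all φ_e concise, then a restriction φ_G ≥ ψ_G exists if and only if φ_e ≥ ψ_e for every edge e. (It suffices to prove the special case: G has two edges sharing exactly one vertex.) -/

import Mathlib

/-!
For the forward direction, pick a functional `h` with `h ψ₂ = 1` and contract the parties of the
second edge with it. Since `Mv` meets `φ₂` only through this contraction, the first vertex is
still acted on by `Mu` alone and the middle vertex by a map `N₂ : V₂ → W₂` alone, so
`Mu ⊗ N₂` sends `φ₁` to `ψ₁`; symmetrically for the second edge. Conversely, edgewise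
restrictions assemble into a vertex-wise one with `N₂ ⊗ N₃` at the shared vertex.
-/

open TensorProduct

section

variable {V U : Type*} [AddCommGroup V] [Module ℂ V] [AddCommGroup U] [Module ℂ U]

/-- Contraction of `φ ∈ V ⊗ U` with a functional on `U`. -/
noncomputable def ctrRight (φ : V ⊗[ℂ] U) (f : Module.Dual ℂ U) : V :=
  TensorProduct.rid ℂ V ((LinearMap.lTensor V f) φ)

/-- Contraction of `φ ∈ V ⊗ U` with a functional on `V`. -/
noncomputable def ctrLeft (φ : V ⊗[ℂ] U) (f : Module.Dual ℂ V) : U :=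
  TensorProduct.lid ℂ U ((LinearMap.rTensor U f) φ)

/-- `φ ∈ V ⊗ U` is concise: both single-party contraction spaces are full. -/
def Concise (φ : V ⊗[ℂ] U) : Prop :=
  Submodule.span ℂ (Set.range fun f : Module.Dual ℂ U => ctrRight φ f) = ⊤ ∧
  Submodule.span ℂ (Set.range fun f : Module.Dual ℂ V => ctrLeft φ f) = ⊤

end

/-- Regrouping `(V₁⊗V₂)⊗(V₃⊗V₄) ≃ V₁⊗((V₂⊗V₃)⊗V₄)`: from the edge-wise grouping of
two edges sharing one middle vertex to the vertex-wise grouping. -/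
noncomputable def vertexRegroup (V₁ V₂ V₃ V₄ : Type*) [AddCommGroup V₁] [Module ℂ V₁]
    [AddCommGroup V₂] [Module ℂ V₂] [AddCommGroup V₃] [Module ℂ V₃]
    [AddCommGroup V₄] [Module ℂ V₄] :
    (V₁ ⊗[ℂ] V₂) ⊗[ℂ] (V₃ ⊗[ℂ] V₄) ≃ₗ[ℂ] V₁ ⊗[ℂ] ((V₂ ⊗[ℂ] V₃) ⊗[ℂ] V₄) :=
  (TensorProduct.assoc ℂ V₁ V₂ (V₃ ⊗[ℂ] V₄)).trans
    (TensorProduct.congr (LinearEquiv.refl ℂ V₁)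
      ((TensorProduct.assoc ℂ V₂ V₃ V₄).symm))

open LinearMap

namespace vertexRegroup

variable {V₁ V₂ V₃ V₄ W₁ W₂ W₃ W₄ : Type*}
    [AddCommGroup V₁] [Module ℂ V₁] [AddCommGroup V₂] [Module ℂ V₂]
    [AddCommGroup V₃] [Module ℂ V₃] [AddCommGroup V₄] [Module ℂ V₄]
    [AddCommGroup W₁] [Module ℂ W₁] [AddCommGroup W₂] [Module ℂ W₂]
    [AddCommGroup W₃] [Module ℂ W₃] [AddCommGroup W₄] [Module ℂ W₄]

@[simp] lemma tmul_tmul (a : V₁) (b : V₂) (c : V₃) (d : V₄) :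
    vertexRegroup V₁ V₂ V₃ V₄ ((a ⊗ₜ b) ⊗ₜ (c ⊗ₜ d)) = a ⊗ₜ ((b ⊗ₜ c) ⊗ₜ d) := by
  simp [vertexRegroup]

lemma map_tmul (N₁ : V₁ →ₗ[ℂ] W₁) (N₂ : V₂ →ₗ[ℂ] W₂) (N₃ : V₃ →ₗ[ℂ] W₃)
    (N₄ : V₄ →ₗ[ℂ] W₄) (x : V₁ ⊗[ℂ] V₂) (y : V₃ ⊗[ℂ] V₄) :
    map N₁ (map (map N₂ N₃) N₄) (vertexRegroup V₁ V₂ V₃ V₄ (x ⊗ₜ y)) =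
      vertexRegroup W₁ W₂ W₃ W₄ (map N₁ N₂ x ⊗ₜ map N₃ N₄ y) := by
  induction x using TensorProduct.induction_on with
  | zero => simp
  | add x₁ x₂ h₁ h₂ => simp [add_tmul, h₁, h₂]
  | tmul a b =>
    induction y using TensorProduct.induction_on with
    | zero => simp
    | add y₁ y₂ h₁ h₂ => simp [tmul_add, h₁, h₂]
    | tmul c d => simp

lemma tmul_eq_lTensor (x : V₁ ⊗[ℂ] V₂) (y : V₃ ⊗[ℂ] V₄) :
    vertexRegroup V₁ V₂ V₃ V₄ (x ⊗ₜ y) =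
      lTensor V₁ ((TensorProduct.assoc ℂ V₂ V₃ V₄).symm.toLinearMap ∘ₗ
        (mk ℂ V₂ (V₃ ⊗[ℂ] V₄)).flip y) x := by
  induction x using TensorProduct.induction_on with
  | zero => simp
  | add x₁ x₂ h₁ h₂ => simp [add_tmul, h₁, h₂]
  | tmul a b => simp [vertexRegroup]

lemma tmul_eq_rTensor (x : V₁ ⊗[ℂ] V₂) (y : V₃ ⊗[ℂ] V₄) :
    vertexRegroup V₁ V₂ V₃ V₄ (x ⊗ₜ y) =
      TensorProduct.assoc ℂ V₁ (V₂ ⊗[ℂ] V₃) V₄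
        (rTensor V₄ ((TensorProduct.assoc ℂ V₁ V₂ V₃).toLinearMap ∘ₗ mk ℂ (V₁ ⊗[ℂ] V₂) V₃ x) y) := by
  induction y using TensorProduct.induction_on with
  | zero => simp
  | add y₁ y₂ h₁ h₂ => simp [tmul_add, h₁, h₂]
  | tmul c d =>
    induction x using TensorProduct.induction_on with
    | zero => simp
    | add x₁ x₂ h₁ h₂ => simp [add_tmul, h₁, h₂]
    | tmul a b => simp

end vertexRegroup

section contract
variable {W₁ W₂ W₃ W₄ : Type*}
    [AddCommGroup W₁] [Module ℂ W₁] [AddCommGroup W₂] [Module ℂ W₂]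
    [AddCommGroup W₃] [Module ℂ W₃] [AddCommGroup W₄] [Module ℂ W₄]

noncomputable def contractSecondEdge (h : Module.Dual ℂ (W₃ ⊗[ℂ] W₄)) :
    W₁ ⊗[ℂ] ((W₂ ⊗[ℂ] W₃) ⊗[ℂ] W₄) →ₗ[ℂ] W₁ ⊗[ℂ] W₂ :=
  lTensor W₁ ((TensorProduct.rid ℂ W₂).toLinearMap ∘ₗ lTensor W₂ h ∘ₗ
    (TensorProduct.assoc ℂ W₂ W₃ W₄).toLinearMap)

noncomputable def contractFirstEdge (h : Module.Dual ℂ (W₁ ⊗[ℂ] W₂)) :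
    W₁ ⊗[ℂ] ((W₂ ⊗[ℂ] W₃) ⊗[ℂ] W₄) →ₗ[ℂ] W₃ ⊗[ℂ] W₄ :=
  rTensor W₄ ((TensorProduct.lid ℂ W₃).toLinearMap ∘ₗ rTensor W₃ h ∘ₗ
    (TensorProduct.assoc ℂ W₁ W₂ W₃).symm.toLinearMap) ∘ₗ
    (TensorProduct.assoc ℂ W₁ (W₂ ⊗[ℂ] W₃) W₄).symm.toLinearMap

lemma contractSecondEdge_vertexRegroup (h : Module.Dual ℂ (W₃ ⊗[ℂ] W₄)) (x : W₁ ⊗[ℂ] W₂)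
    (y : W₃ ⊗[ℂ] W₄) : contractSecondEdge h (vertexRegroup W₁ W₂ W₃ W₄ (x ⊗ₜ y)) = h y • x := by
  induction x using TensorProduct.induction_on with
  | zero => simp
  | add x₁ x₂ h₁ h₂ => simp [add_tmul, h₁, h₂]
  | tmul a b => simp [vertexRegroup.tmul_eq_lTensor, contractSecondEdge, tmul_smul]

lemma contractFirstEdge_vertexRegroup (h : Module.Dual ℂ (W₁ ⊗[ℂ] W₂)) (x : W₁ ⊗[ℂ] W₂)
    (y : W₃ ⊗[ℂ] W₄) : contractFirstEdge h (vertexRegroup W₁ W₂ W₃ W₄ (x ⊗ₜ y)) = h x • y := by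
  induction y using TensorProduct.induction_on with
  | zero => simp
  | add y₁ y₂ h₁ h₂ => simp [tmul_add, h₁, h₂]
  | tmul c d => simp [vertexRegroup.tmul_eq_rTensor, contractFirstEdge, smul_tmul']

end contract

section restriction
variable {V₁ V₂ V₃ V₄ W₁ W₂ W₃ W₄ : Type*}
    [AddCommGroup V₁] [Module ℂ V₁] [AddCommGroup V₂] [Module ℂ V₂]
    [AddCommGroup V₃] [Module ℂ V₃] [AddCommGroup V₄] [Module ℂ V₄]
    [AddCommGroup W₁] [Module ℂ W₁] [AddCommGroup W₂] [Module ℂ W₂]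
    [AddCommGroup W₃] [Module ℂ W₃] [AddCommGroup W₄] [Module ℂ W₄]
    (Mu : V₁ →ₗ[ℂ] W₁) (Mv : V₂ ⊗[ℂ] V₃ →ₗ[ℂ] W₂ ⊗[ℂ] W₃) (Mw : V₄ →ₗ[ℂ] W₄)

lemma exists_contractSecondEdge_map_vertexRegroup_eq_map (h : Module.Dual ℂ (W₃ ⊗[ℂ] W₄))
    (y : V₃ ⊗[ℂ] V₄) : ∃ N₂ : V₂ →ₗ[ℂ] W₂, ∀ x : V₁ ⊗[ℂ] V₂,
      contractSecondEdge h (map Mu (map Mv Mw) (vertexRegroup V₁ V₂ V₃ V₄ (x ⊗ₜ y))) =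
        map Mu N₂ x :=
  ⟨_, fun x => by rw [vertexRegroup.tmul_eq_lTensor, contractSecondEdge, lTensor_map, map_lTensor]⟩

lemma exists_contractFirstEdge_map_vertexRegroup_eq_map (h : Module.Dual ℂ (W₁ ⊗[ℂ] W₂))
    (x : V₁ ⊗[ℂ] V₂) : ∃ N₃ : V₃ →ₗ[ℂ] W₃, ∀ y : V₃ ⊗[ℂ] V₄,
      contractFirstEdge h (map Mu (map Mv Mw) (vertexRegroup V₁ V₂ V₃ V₄ (x ⊗ₜ y))) =
        map N₃ Mw y :=
  ⟨_, fun y => by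
    rw [vertexRegroup.tmul_eq_rTensor, contractFirstEdge, comp_apply, LinearEquiv.coe_coe,
      map_map_assoc, LinearEquiv.symm_apply_apply, rTensor_map, map_rTensor]⟩

variable {Mu Mv Mw} {φ₁ : V₁ ⊗[ℂ] V₂} {φ₂ : V₃ ⊗[ℂ] V₄} {ψ₁ : W₁ ⊗[ℂ] W₂} {ψ₂ : W₃ ⊗[ℂ] W₄}

lemma exists_map_eq_of_map_vertexRegroup_eq_left (hψ₂ : ψ₂ ≠ 0)
    (hM : map Mu (map Mv Mw) (vertexRegroup V₁ V₂ V₃ V₄ (φ₁ ⊗ₜ φ₂)) =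
      vertexRegroup W₁ W₂ W₃ W₄ (ψ₁ ⊗ₜ ψ₂)) :
    ∃ (N₁ : V₁ →ₗ[ℂ] W₁) (N₂ : V₂ →ₗ[ℂ] W₂), map N₁ N₂ φ₁ = ψ₁ := by
  obtain ⟨h, hh⟩ := Module.Projective.exists_dual_eq_one ℂ hψ₂
  obtain ⟨N₂, hN₂⟩ := exists_contractSecondEdge_map_vertexRegroup_eq_map Mu Mv Mw h φ₂
  refine ⟨Mu, N₂, ?_⟩
  simpa [hN₂, contractSecondEdge_vertexRegroup, hh] using congr(contractSecondEdge h $hM)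

lemma exists_map_eq_of_map_vertexRegroup_eq_right (hψ₁ : ψ₁ ≠ 0)
    (hM : map Mu (map Mv Mw) (vertexRegroup V₁ V₂ V₃ V₄ (φ₁ ⊗ₜ φ₂)) =
      vertexRegroup W₁ W₂ W₃ W₄ (ψ₁ ⊗ₜ ψ₂)) :
    ∃ (N₃ : V₃ →ₗ[ℂ] W₃) (N₄ : V₄ →ₗ[ℂ] W₄), map N₃ N₄ φ₂ = ψ₂ := by
  obtain ⟨h, hh⟩ := Module.Projective.exists_dual_eq_one ℂ hψ₁
  obtain ⟨N₃, hN₃⟩ := exists_contractFirstEdge_map_vertexRegroup_eq_map Mu Mv Mw h φ₁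
  refine ⟨N₃, Mw, ?_⟩
  simpa [hN₃, contractFirstEdge_vertexRegroup, hh] using congr(contractFirstEdge h $hM)

end restriction

theorem restriction_two_edges_iff_edgewise_general
    {V₁ V₂ V₃ V₄ W₁ W₂ W₃ W₄ : Type*}
    [AddCommGroup V₁] [Module ℂ V₁] [AddCommGroup V₂] [Module ℂ V₂]
    [AddCommGroup V₃] [Module ℂ V₃] [AddCommGroup V₄] [Module ℂ V₄]
    [AddCommGroup W₁] [Module ℂ W₁] [AddCommGroup W₂] [Module ℂ W₂]
    [AddCommGroup W₃] [Module ℂ W₃] [AddCommGroup W₄] [Module ℂ W₄]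
    (φ₁ : V₁ ⊗[ℂ] V₂) (φ₂ : V₃ ⊗[ℂ] V₄)
    (ψ₁ : W₁ ⊗[ℂ] W₂) (ψ₂ : W₃ ⊗[ℂ] W₄)
    (hψ₁ : ψ₁ ≠ 0) (hψ₂ : ψ₂ ≠ 0) :
    (∃ (Mu : V₁ →ₗ[ℂ] W₁) (Mv : V₂ ⊗[ℂ] V₃ →ₗ[ℂ] W₂ ⊗[ℂ] W₃) (Mw : V₄ →ₗ[ℂ] W₄),
        TensorProduct.map Mu (TensorProduct.map Mv Mw)
            (vertexRegroup V₁ V₂ V₃ V₄ (φ₁ ⊗ₜ[ℂ] φ₂)) =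
          vertexRegroup W₁ W₂ W₃ W₄ (ψ₁ ⊗ₜ[ℂ] ψ₂)) ↔
    ((∃ (N₁ : V₁ →ₗ[ℂ] W₁) (N₂ : V₂ →ₗ[ℂ] W₂), TensorProduct.map N₁ N₂ φ₁ = ψ₁) ∧
      (∃ (N₃ : V₃ →ₗ[ℂ] W₃) (N₄ : V₄ →ₗ[ℂ] W₄), TensorProduct.map N₃ N₄ φ₂ = ψ₂)) := by
  constructor
  · rintro ⟨Mu, Mv, Mw, hM⟩
    exact ⟨exists_map_eq_of_map_vertexRegroup_eq_left hψ₂ hM,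
      exists_map_eq_of_map_vertexRegroup_eq_right hψ₁ hM⟩
  · rintro ⟨⟨N₁, N₂, rfl⟩, ⟨N₃, N₄, rfl⟩⟩
    exact ⟨N₁, map N₂ N₃, N₄, vertexRegroup.map_tmul N₁ N₂ N₃ N₄ φ₁ φ₂⟩

/-- Acyclic case of edge-wise reduction of restrictions (the special case of two
edges sharing exactly one vertex): for concise edge states `φ₁, φ₂` (and nonzero
target edge states), a restriction between the entanglement structures exists iff
edge-wise restrictions exist. -/
theorem restriction_two_edges_iff_edgewise
    {V₁ V₂ V₃ V₄ W₁ W₂ W₃ W₄ : Type*}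
    [AddCommGroup V₁] [Module ℂ V₁] [AddCommGroup V₂] [Module ℂ V₂]
    [AddCommGroup V₃] [Module ℂ V₃] [AddCommGroup V₄] [Module ℂ V₄]
    [AddCommGroup W₁] [Module ℂ W₁] [AddCommGroup W₂] [Module ℂ W₂]
    [AddCommGroup W₃] [Module ℂ W₃] [AddCommGroup W₄] [Module ℂ W₄]
    (φ₁ : V₁ ⊗[ℂ] V₂) (φ₂ : V₃ ⊗[ℂ] V₄)
    (ψ₁ : W₁ ⊗[ℂ] W₂) (ψ₂ : W₃ ⊗[ℂ] W₄)
    (hφ₁ : Concise φ₁) (hφ₂ : Concise φ₂)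
    (hψ₁ : ψ₁ ≠ 0) (hψ₂ : ψ₂ ≠ 0) :
    (∃ (Mu : V₁ →ₗ[ℂ] W₁) (Mv : V₂ ⊗[ℂ] V₃ →ₗ[ℂ] W₂ ⊗[ℂ] W₃) (Mw : V₄ →ₗ[ℂ] W₄),
        TensorProduct.map Mu (TensorProduct.map Mv Mw)
            (vertexRegroup V₁ V₂ V₃ V₄ (φ₁ ⊗ₜ[ℂ] φ₂)) =
          vertexRegroup W₁ W₂ W₃ W₄ (ψ₁ ⊗ₜ[ℂ] ψ₂)) ↔
    ((∃ (N₁ : V₁ →ₗ[ℂ] W₁) (N₂ : V₂ →ₗ[ℂ] W₂), TensorProduct.map N₁ N₂ φ₁ = ψ₁) ∧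
      (∃ (N₃ : V₃ →ₗ[ℂ] W₃) (N₄ : V₄ →ₗ[ℂ] W₄), TensorProduct.map N₃ N₄ φ₂ = ψ₂)) :=
  restriction_two_edges_iff_edgewise_general φ₁ φ₂ ψ₁ ψ₂ hψ₁ hψ₂
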